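/- Let n ≥ 2 and define e(v, u) := (n/2) λ_max(v ⊗ v − u) for v ∈ ℝⁿ, u ∈ Mₙ⁰. Then for all (v, u) ∈ ℝⁿ × Mₙ⁰ the operator norm of u satisfies ‖u‖_op ≤ (2(n−1)/n) e(v, u). -/

import Mathlib

/-!
Write `λ` for the largest eigenvalue of `M = v ⊗ v − u`. In the Loewner order `M ≤ λ` and
`v ⊗ v ≥ 0`, so `u = v ⊗ v − M ≥ −λ`: every eigenvalue of `u` is at least `−λ`. As `u` is
trace-free, each eigenvalue of `u` is minus the sum of the `n − 1` others, hence at most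
`(n − 1) λ`; for `n ≥ 2` this gives `|μ| ≤ (n − 1) λ` for every eigenvalue `μ`. For a symmetric
matrix the operator norm is the largest `|μ|`, and `(n − 1) λ = (2(n − 1)/n) e(v, u)`.
-/

open scoped BigOperators

noncomputable section

/-- The Euclidean norm of a vector in `ℝ^m`. -/
def eNorm {m : ℕ} (v : Fin m → ℝ) : ℝ := Real.sqrt (∑ i, v i ^ 2)

/-- `Mₙ⁰`: the submodule of symmetric trace-free `n × n` real matrices. -/
def M0 (n : ℕ) : Submodule ℝ (Matrix (Fin n) (Fin n) ℝ) where
  carrier := {A | A.IsSymm ∧ A.trace = 0}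
  add_mem' := fun ha hb => ⟨ha.1.add hb.1, by rw [Matrix.trace_add, ha.2, hb.2, add_zero]⟩
  zero_mem' := ⟨Matrix.isSymm_zero, Matrix.trace_zero ..⟩
  smul_mem' := fun c _ hA => ⟨hA.1.smul c, by rw [Matrix.trace_smul, hA.2, smul_zero]⟩

/-- For `v ∈ ℝⁿ` and `u ∈ Mₙ⁰`, the matrix `v ⊗ v − u` is symmetric (hence Hermitian). -/
lemma herm_aux {n : ℕ} (v : Fin n → ℝ) (u : M0 n) :
    (Matrix.vecMulVec v v - (u : Matrix (Fin n) (Fin n) ℝ)).IsHermitian := by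
  rw [Matrix.IsHermitian, Matrix.conjTranspose_eq_transpose_of_trivial]
  have h1 : (Matrix.vecMulVec v v).IsSymm := by
    apply Matrix.IsSymm.ext
    intro i j
    simp [Matrix.vecMulVec_apply, mul_comm]
  exact h1.sub u.2.1

/-- `e(v, u) = (n/2) λ_max(v ⊗ v − u)`, where `λ_max` is the largest eigenvalue
of the symmetric matrix `v ⊗ v − u`. -/
def efun (n : ℕ) : (Fin n → ℝ) × M0 n → ℝ :=
  fun p => ((n : ℝ) / 2) * ⨆ i, (herm_aux p.1 p.2).eigenvalues i

/-- The operator norm of an `n × n` real matrix acting on Euclidean `ℝⁿ`. -/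
def opNormMat {n : ℕ} (A : Matrix (Fin n) (Fin n) ℝ) : ℝ :=
  ‖LinearMap.toContinuousLinearMap (Matrix.toEuclideanLin A)‖

namespace Matrix.IsHermitian

variable {𝕜 n : Type*} [RCLike 𝕜] [Fintype n] [DecidableEq n] {A : Matrix n n 𝕜}

section LoewnerOrder

open scoped MatrixOrder

lemma le_algebraMap_iff_eigenvalues_le (hA : A.IsHermitian) {c : ℝ} :
    A ≤ algebraMap ℝ _ c ↔ ∀ i, hA.eigenvalues i ≤ c := by
  rw [le_algebraMap_iff_spectrum_le hA.isSelfAdjoint, hA.spectrum_real_eq_range_eigenvalues]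
  simp

lemma algebraMap_le_iff_le_eigenvalues (hA : A.IsHermitian) {c : ℝ} :
    algebraMap ℝ _ c ≤ A ↔ ∀ i, c ≤ hA.eigenvalues i := by
  rw [algebraMap_le_iff_le_spectrum hA.isSelfAdjoint, hA.spectrum_real_eq_range_eigenvalues]
  simp

lemma le_algebraMap_iSup_eigenvalues (hA : A.IsHermitian) :
    A ≤ algebraMap ℝ _ (⨆ i, hA.eigenvalues i) :=
  hA.le_algebraMap_iff_eigenvalues_le.2 fun i => le_ciSup (Set.finite_range _).bddAbove i

end LoewnerOrder

open scoped Matrix.Norms.L2Operator in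
lemma l2_opNorm_eq_norm_eigenvalues (hA : A.IsHermitian) : ‖A‖ = ‖hA.eigenvalues‖ := by
  conv_lhs => rw [hA.spectral_theorem, Unitary.conjStarAlgAut_apply, ← Unitary.coe_star,
    CStarRing.norm_mul_coe_unitary, CStarRing.norm_coe_unitary_mul, l2_opNorm_diagonal]
  simp [Pi.norm_def]

end Matrix.IsHermitian

lemma opNormMat_eq_norm_eigenvalues {n : ℕ} {A : Matrix (Fin n) (Fin n) ℝ} (hA : A.IsHermitian) :
    opNormMat A = ‖hA.eigenvalues‖ :=
  hA.l2_opNorm_eq_norm_eigenvalues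

lemma le_card_sub_one_mul_of_sum_eq_zero {ι : Type*} [Fintype ι] {x : ι → ℝ} {c : ℝ}
    (hsum : ∑ i, x i = 0) (hx : ∀ i, -c ≤ x i) (j : ι) :
    x j ≤ (Fintype.card ι - 1) * c := by
  classical
  have hj := Finset.mem_univ j
  have hrest : (Finset.univ.erase j).card • (-c) ≤ ∑ i ∈ Finset.univ.erase j, x i :=
    Finset.card_nsmul_le_sum _ _ _ fun i _ => hx i
  rw [nsmul_eq_mul, Finset.cast_card_erase_of_mem hj, Finset.card_univ] at hrest
  linarith [Finset.add_sum_erase Finset.univ x hj]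

namespace M0

open Matrix

variable {n : ℕ}

lemma isHermitian (u : M0 n) : (u : Matrix (Fin n) (Fin n) ℝ).IsHermitian :=
  isHermitian_iff_isSymm.2 u.2.1

lemma sum_eigenvalues (u : M0 n) : ∑ i, (isHermitian u).eigenvalues i = 0 := by
  simpa using ((isHermitian u).trace_eq_sum_eigenvalues).symm.trans u.2.2

open scoped MatrixOrder in
lemma neg_iSup_eigenvalues_le_eigenvalues (v : Fin n → ℝ) (u : M0 n) (i : Fin n) :
    -(⨆ j, (herm_aux v u).eigenvalues j) ≤ (isHermitian u).eigenvalues i := by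
  refine (isHermitian u).algebraMap_le_iff_le_eigenvalues.1 ?_ i
  have hvv : 0 ≤ vecMulVec v v := by
    simpa using (posSemidef_vecMulVec_self_star v).nonneg
  have hM := (herm_aux v u).le_algebraMap_iSup_eigenvalues
  calc algebraMap ℝ _ (-(⨆ j, (herm_aux v u).eigenvalues j))
      = 0 - algebraMap ℝ _ (⨆ j, (herm_aux v u).eigenvalues j) := by rw [map_neg, zero_sub]
    _ ≤ vecMulVec v v - (vecMulVec v v - u) := sub_le_sub hvv hM
    _ = u := sub_sub_cancel _ _

end M0

theorem opNorm_le_efun (n : ℕ) (hn : 2 ≤ n) (v : Fin n → ℝ) (u : M0 n) :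
    opNormMat (u : Matrix (Fin n) (Fin n) ℝ) ≤ (2 * ((n : ℝ) - 1) / n) * efun n (v, u) := by
  set lmax := ⨆ j, (herm_aux v u).eigenvalues j
  have hu := M0.isHermitian u
  have hlow : ∀ i, -lmax ≤ hu.eigenvalues i := M0.neg_iSup_eigenvalues_le_eigenvalues v u
  have hup : ∀ i, hu.eigenvalues i ≤ (n - 1) * lmax := by
    simpa using le_card_sub_one_mul_of_sum_eq_zero (M0.sum_eigenvalues u) hlow
  have hn' : (2 : ℝ) ≤ n := by exact_mod_cast hn
  have hlmax : 0 ≤ lmax := by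
    nlinarith [hlow ⟨0, by omega⟩, hup ⟨0, by omega⟩]
  have hnorm : opNormMat (u : Matrix (Fin n) (Fin n) ℝ) ≤ (n - 1) * lmax := by
    have hC : 0 ≤ ((n : ℝ) - 1) * lmax := by nlinarith
    rw [opNormMat_eq_norm_eigenvalues hu, pi_norm_le_iff_of_nonneg hC]
    exact fun i => abs_le.2 ⟨by nlinarith [hlow i], hup i⟩
  calc opNormMat (u : Matrix (Fin n) (Fin n) ℝ) ≤ (n - 1) * lmax := hnorm
    _ = (2 * ((n : ℝ) - 1) / n) * ((n / 2) * lmax) := by field_simp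

end
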